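/- Let h be a complex-valued function defined and C² on a neighborhood of 0 in ℂ with h(0) = 0 and (∂²h/∂z∂z̄)(0) = 0, and fix ζ ∈ 𝔻. Define φ(z) = −log(1 − |(ζ − h(z))/(conj(h(z))·ζ − 1)|²) for z in a neighborhood of 0 (shrinking the neighborhood so that |h(z)| < 1). Then, writing a = (∂h/∂z)(0) and b = (∂h/∂z̄)(0), the mixed Wirtinger derivative satisfies (∂²φ/∂z∂z̄)(0) = |a|² + |b|² − 2·Re(conj(ζ)²·a·b). -/

import Mathlib

/-! The Möbius identity `1 - |(ζ - u)/(ūζ - 1)|² = (1 - |u|²)(1 - |ζ|²)/|ūζ - 1|²` shows that near `0`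
the function `φ` is `P ∘ h` with `P u = log |ūζ - 1|² - log (1 - |u|²) - log (1 - |ζ|²)`, which is
smooth at `0`. Since `∂∂̄ = Δ/4`, the second-order chain rule gives
`4 ∂∂̄φ(0) = D²P(0)(h_x, h_x) + D²P(0)(h_y, h_y) + DP(0)(Δh(0))`, and the last term vanishes since
`Δh(0) = 4 h_{zz̄}(0) = 0`. Finally `D²P(0)(v, w) = 2(1 + |ζ|²)⟨v, w⟩ - 4⟨v, ζ⟩⟨w, ζ⟩`, and
substituting `h_x = a + b`, `h_y = i(a - b)` gives the formula. -/

open Complex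

/-- Wirtinger derivative `∂f/∂z = (1/2)(∂f/∂x − i·∂f/∂y)` of `f : ℂ → ℂ` (viewing `ℂ`
as `ℝ²`), where `∂f/∂x` (resp. `∂f/∂y`) is the real directional derivative in the
direction `1` (resp. `i`). -/
noncomputable def wirtingerZ (f : ℂ → ℂ) (z : ℂ) : ℂ :=
  (1 / 2) * (fderiv ℝ f z 1 - Complex.I * fderiv ℝ f z Complex.I)

/-- Wirtinger derivative `∂f/∂z̄ = (1/2)(∂f/∂x + i·∂f/∂y)`. -/
noncomputable def wirtingerZbar (f : ℂ → ℂ) (z : ℂ) : ℂ :=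
  (1 / 2) * (fderiv ℝ f z 1 + Complex.I * fderiv ℝ f z Complex.I)

open Topology Laplacian InnerProductSpace

section SecondDerivative

variable {𝕜 : Type*} [NontriviallyNormedField 𝕜] {E F G : Type*}
  [NormedAddCommGroup E] [NormedSpace 𝕜 E] [NormedAddCommGroup F] [NormedSpace 𝕜 F]
  [NormedAddCommGroup G] [NormedSpace 𝕜 G]

theorem ContDiffAt.hasFDerivAt_fderiv {f : E → F} {x : E} (hf : ContDiffAt 𝕜 2 f x) :
    HasFDerivAt (fderiv 𝕜 f) (fderiv 𝕜 (fderiv 𝕜 f) x) x :=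
  ((hf.fderiv_right (m := 1) le_rfl).differentiableAt one_ne_zero).hasFDerivAt

theorem fderiv_fderiv_comp_apply {g : F → G} {f : E → F} {x : E}
    (hg : ContDiffAt 𝕜 2 g (f x)) (hf : ContDiffAt 𝕜 2 f x) (v w : E) :
    fderiv 𝕜 (fderiv 𝕜 (g ∘ f)) x v w =
      fderiv 𝕜 (fderiv 𝕜 g) (f x) (fderiv 𝕜 f x v) (fderiv 𝕜 f x w) +
        fderiv 𝕜 g (f x) (fderiv 𝕜 (fderiv 𝕜 f) x v w) := by
  have hfderiv : fderiv 𝕜 (g ∘ f) =ᶠ[𝓝 x] fun y ↦ (fderiv 𝕜 g (f y)).comp (fderiv 𝕜 f y) := by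
    filter_upwards [hf.continuousAt.eventually ((hg.eventually (by simp)).mono
      fun _ h ↦ h.differentiableAt two_ne_zero), (hf.eventually (by simp)).mono
      fun _ h ↦ h.differentiableAt two_ne_zero] with y hgy hfy
    exact fderiv_comp y hgy hfy
  have hcomp : HasFDerivAt (fun y ↦ (fderiv 𝕜 g (f y)).comp (fderiv 𝕜 f y)) _ x :=
    (hg.hasFDerivAt_fderiv.comp x (hf.differentiableAt two_ne_zero).hasFDerivAt).clm_comp
      hf.hasFDerivAt_fderiv
  rw [hfderiv.fderiv_eq, hcomp.fderiv]
  simp [add_comm]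

theorem fderiv_fderiv_const_sub (f : E → F) (c : F) (x : E) :
    fderiv 𝕜 (fderiv 𝕜 (fun y ↦ c - f y)) x = -fderiv 𝕜 (fderiv 𝕜 f) x := by
  have h : fderiv 𝕜 (fun y ↦ c - f y) = fun y ↦ -fderiv 𝕜 f y := funext fun _ ↦ fderiv_const_sub c
  rw [h, fderiv_fun_neg]

end SecondDerivative

theorem laplacian_comp_apply {E F G : Type*} [NormedAddCommGroup E] [InnerProductSpace ℝ E]
    [FiniteDimensional ℝ E] [NormedAddCommGroup F] [NormedSpace ℝ F]
    [NormedAddCommGroup G] [NormedSpace ℝ G] {ι : Type*} [Fintype ι] (b : OrthonormalBasis ι ℝ E)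
    {g : F → G} {f : E → F} {x : E} (hg : ContDiffAt ℝ 2 g (f x)) (hf : ContDiffAt ℝ 2 f x) :
    Δ (g ∘ f) x = ∑ i, fderiv ℝ (fderiv ℝ g) (f x) (fderiv ℝ f x (b i)) (fderiv ℝ f x (b i)) +
      fderiv ℝ g (f x) (Δ f x) := by
  simp only [laplacian_eq_iteratedFDeriv_orthonormalBasis _ b, iteratedFDeriv_two_apply,
    Matrix.cons_val_zero, Matrix.cons_val_one, fderiv_fderiv_comp_apply hg hf,
    Finset.sum_add_distrib, map_sum]

theorem laplacian_comp_apply_complexPlane {G : Type*} [NormedAddCommGroup G] [NormedSpace ℝ G]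
    {g : ℂ → G} {f : ℂ → ℂ} {z : ℂ} (hg : ContDiffAt ℝ 2 g (f z)) (hf : ContDiffAt ℝ 2 f z) :
    Δ (g ∘ f) z = fderiv ℝ (fderiv ℝ g) (f z) (fderiv ℝ f z 1) (fderiv ℝ f z 1) +
      fderiv ℝ (fderiv ℝ g) (f z) (fderiv ℝ f z I) (fderiv ℝ f z I) + fderiv ℝ g (f z) (Δ f z) := by
  simp [laplacian_comp_apply orthonormalBasisOneI hg hf, Fin.sum_univ_two]

theorem wirtingerZ_wirtingerZbar_eq_laplacian {f : ℂ → ℂ} {z : ℂ} (hf : ContDiffAt ℝ 2 f z) :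
    wirtingerZ (wirtingerZbar f) z = Δ f z / 4 := by
  set D := fderiv ℝ (fderiv ℝ f) z
  have hD : HasFDerivAt (fderiv ℝ f) D z := hf.hasFDerivAt_fderiv
  have hZbar : HasFDerivAt (wirtingerZbar f)
      ((1 / 2 : ℂ) • (D.flip 1 + I • D.flip I)) z := by
    have := ((hD.clm_apply (hasFDerivAt_const 1 z)).add
      ((hD.clm_apply (hasFDerivAt_const I z)).const_mul I)).const_mul (1 / 2 : ℂ)
    exact this.congr_fderiv (by simp [smul_smul])
  have hsymm : D 1 I = D I 1 :=
    hf.isSymmSndFDerivAt (by simp [minSmoothness_of_isRCLikeNormedField]) 1 I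
  rw [laplacian_eq_iteratedFDeriv_complexPlane, wirtingerZ, hZbar.fderiv]
  simp only [iteratedFDeriv_two_apply, one_div, smul_add, add_apply, smul_apply,
    ContinuousLinearMap.flip_apply, smul_eq_mul, hsymm, Matrix.cons_val_zero, Matrix.cons_val_one]
  linear_combination (-(D I I) / 4) * I_sq

theorem Real.fderiv_fderiv_log_apply (t a b : ℝ) :
    fderiv ℝ (fderiv ℝ Real.log) t a b = -(a * b) / t ^ 2 := by
  have h := iteratedFDeriv_two_apply (𝕜 := ℝ) Real.log t ![a, b]
  simp only [Matrix.cons_val_zero, Matrix.cons_val_one] at h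
  rw [← h, iteratedFDeriv_apply_eq_iteratedDeriv_mul_prod, iteratedDeriv_succ, iteratedDeriv_one,
    Real.deriv_log', deriv_inv]
  simp only [Fin.prod_univ_two, Matrix.cons_val_zero, Matrix.cons_val_one, smul_eq_mul]
  ring

theorem fderiv_fderiv_log_comp_apply {E : Type*} [NormedAddCommGroup E] [NormedSpace ℝ E]
    {f : E → ℝ} {x : E} (hf : ContDiffAt ℝ 2 f x) (hx : f x ≠ 0) (v w : E) :
    fderiv ℝ (fderiv ℝ (fun y ↦ Real.log (f y))) x v w =
      fderiv ℝ (fderiv ℝ f) x v w / f x - fderiv ℝ f x v * fderiv ℝ f x w / f x ^ 2 := by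
  change fderiv ℝ (fderiv ℝ (Real.log ∘ f)) x v w = _
  rw [fderiv_fderiv_comp_apply (Real.contDiffAt_log.2 hx) hf,
    Real.fderiv_fderiv_log_apply, (Real.hasDerivAt_log hx).hasFDerivAt.fderiv]
  simp only [ContinuousLinearMap.toSpanSingleton_apply, smul_eq_mul]
  ring

theorem fderiv_fderiv_norm_sq_apply {F : Type*} [NormedAddCommGroup F] [InnerProductSpace ℝ F]
    (x v w : F) : fderiv ℝ (fderiv ℝ (fun y : F ↦ ‖y‖ ^ 2)) x v w = 2 * inner ℝ v w := by
  have h : fderiv ℝ (fun y : F ↦ ‖y‖ ^ 2) = ⇑(2 • innerSL ℝ (E := F)) := by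
    rw [fderiv_norm_sq]; rfl
  rw [h, ContinuousLinearMap.fderiv]
  simp only [FunLike.coe_smul, Pi.smul_apply, nsmul_eq_mul, Nat.cast_ofNat]
  rfl

open ComplexConjugate

theorem conj_mul_sub_one_ne_zero {u ζ : ℂ} (hu : ‖u‖ < 1) (hζ : ‖ζ‖ < 1) :
    conj u * ζ - 1 ≠ 0 := by
  intro h
  have h1 : ‖u‖ * ‖ζ‖ = 1 := by
    rw [← RCLike.norm_conj u, ← norm_mul, sub_eq_zero.1 h, norm_one]
  nlinarith [norm_nonneg u, norm_nonneg ζ]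

theorem one_sub_norm_sq_div_conj_mul_sub_one {u ζ : ℂ} (h : conj u * ζ - 1 ≠ 0) :
    1 - ‖(ζ - u) / (conj u * ζ - 1)‖ ^ 2 =
      (1 - ‖u‖ ^ 2) * (1 - ‖ζ‖ ^ 2) / ‖conj u * ζ - 1‖ ^ 2 := by
  have hpos : 0 < ‖conj u * ζ - 1‖ ^ 2 := by positivity
  rw [norm_div, div_pow, eq_div_iff hpos.ne', sub_mul, div_mul_cancel₀ _ hpos.ne']
  simp only [Complex.sq_norm, normSq_apply, sub_re, sub_im, mul_re, mul_im, conj_re, conj_im, one_re,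
    one_im]
  ring

-- `-log (1 - |u|²)` pulled back by the disc automorphism exchanging `0` and `ζ`
-- (note `|ūζ - 1| = |1 - ζ̄u|`).
noncomputable def poincarePotential (ζ u : ℂ) : ℝ :=
  -Real.log (1 - ‖(ζ - u) / (conj u * ζ - 1)‖ ^ 2)

theorem poincarePotential_eq {u ζ : ℂ} (hu : ‖u‖ < 1) (hζ : ‖ζ‖ < 1) :
    poincarePotential ζ u =
      Real.log (‖conj u * ζ - 1‖ ^ 2) - Real.log (1 - ‖u‖ ^ 2) - Real.log (1 - ‖ζ‖ ^ 2) := by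
  have hden := conj_mul_sub_one_ne_zero hu hζ
  have hu' : 0 < 1 - ‖u‖ ^ 2 := by nlinarith [norm_nonneg u]
  have hζ' : 0 < 1 - ‖ζ‖ ^ 2 := by nlinarith [norm_nonneg ζ]
  rw [poincarePotential, one_sub_norm_sq_div_conj_mul_sub_one hden,
    Real.log_div (by positivity) (by positivity), Real.log_mul hu'.ne' hζ'.ne']
  ring

theorem hasFDerivAt_conj_mul_sub_one (ζ u : ℂ) :
    HasFDerivAt (fun u : ℂ ↦ conj u * ζ - 1) ((conjCLE : ℂ →L[ℝ] ℂ).smulRight ζ) u :=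
  ((conjCLE : ℂ →L[ℝ] ℂ).smulRight ζ).hasFDerivAt.sub_const 1

theorem contDiff_conj_mul_sub_one (ζ : ℂ) : ContDiff ℝ 2 (fun u : ℂ ↦ conj u * ζ - 1) :=
  ((conjCLE : ℂ →L[ℝ] ℂ).smulRight ζ).contDiff.sub contDiff_const

theorem contDiff_norm_sq_conj_mul_sub_one (ζ : ℂ) :
    ContDiff ℝ 2 (fun u : ℂ ↦ ‖conj u * ζ - 1‖ ^ 2) :=
  (contDiff_norm_sq ℝ).comp (contDiff_conj_mul_sub_one ζ)

theorem contDiffAt_log_norm_sq_conj_mul_sub_one (ζ : ℂ) :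
    ContDiffAt ℝ 2 (fun u : ℂ ↦ Real.log (‖conj u * ζ - 1‖ ^ 2)) 0 :=
  (contDiff_norm_sq_conj_mul_sub_one ζ).contDiffAt.log (by simp)

theorem contDiffAt_log_one_sub_norm_sq :
    ContDiffAt ℝ 2 (fun u : ℂ ↦ Real.log (1 - ‖u‖ ^ 2)) 0 :=
  (contDiff_const.sub (contDiff_norm_sq ℝ)).contDiffAt.log (by simp)

theorem fderiv_fderiv_log_one_sub_norm_sq_zero (v w : ℂ) :
    fderiv ℝ (fderiv ℝ (fun u : ℂ ↦ Real.log (1 - ‖u‖ ^ 2))) 0 v w = -2 * ⟪v, w⟫_ℝ := by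
  rw [fderiv_fderiv_log_comp_apply (contDiff_const.sub (contDiff_norm_sq ℝ)).contDiffAt (by simp),
    fderiv_fderiv_const_sub, fderiv_const_sub, fderiv_norm_sq_apply]
  simp [fderiv_fderiv_norm_sq_apply]

section PoincarePotential

variable {ζ : ℂ}

theorem poincarePotential_eventuallyEq (hζ : ‖ζ‖ < 1) :
    poincarePotential ζ =ᶠ[𝓝 0] fun u ↦
      Real.log (‖conj u * ζ - 1‖ ^ 2) - Real.log (1 - ‖u‖ ^ 2) - Real.log (1 - ‖ζ‖ ^ 2) := by
  filter_upwards [Metric.ball_mem_nhds (0 : ℂ) one_pos] with u hu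
  exact poincarePotential_eq (mem_ball_zero_iff.1 hu) hζ

theorem contDiffAt_poincarePotential_zero (hζ : ‖ζ‖ < 1) :
    ContDiffAt ℝ 2 (poincarePotential ζ) 0 :=
  (((contDiffAt_log_norm_sq_conj_mul_sub_one ζ).sub contDiffAt_log_one_sub_norm_sq).sub
    contDiffAt_const).congr_of_eventuallyEq (poincarePotential_eventuallyEq hζ)

theorem fderiv_fderiv_log_norm_sq_conj_mul_sub_one_zero (v w : ℂ) :
    fderiv ℝ (fderiv ℝ (fun u : ℂ ↦ Real.log (‖conj u * ζ - 1‖ ^ 2))) 0 v w =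
      2 * ‖ζ‖ ^ 2 * ⟪v, w⟫_ℝ - 4 * ⟪v, ζ⟫_ℝ * ⟪w, ζ⟫_ℝ := by
  set L : ℂ →L[ℝ] ℂ := (conjCLE : ℂ →L[ℝ] ℂ).smulRight ζ
  have hL : fderiv ℝ (fun u : ℂ ↦ conj u * ζ - 1) = fun _ ↦ L :=
    funext fun u ↦ (hasFDerivAt_conj_mul_sub_one ζ u).fderiv
  have hB (v : ℂ) : fderiv ℝ (fun u : ℂ ↦ ‖conj u * ζ - 1‖ ^ 2) 0 v = -2 * ⟪v, ζ⟫_ℝ := by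
    rw [(hasFDerivAt_conj_mul_sub_one ζ 0).norm_sq.fderiv]
    simp only [map_zero, zero_mul, zero_sub, map_neg, ContinuousLinearMap.neg_comp, smul_neg,
      neg_apply, smul_apply, ContinuousLinearMap.comp_apply, ContinuousLinearMap.smulRight_apply,
      ContinuousLinearEquiv.coe_coe, ContinuousAlgEquiv.coeCLE_apply, conjCAE_apply, smul_eq_mul,
      coe_innerSL_apply, Complex.inner, map_one, mul_one, mul_re, conj_re, conj_im, nsmul_eq_mul,
      Nat.cast_ofNat]
    ring
  have hB2 : fderiv ℝ (fderiv ℝ (fun u : ℂ ↦ ‖conj u * ζ - 1‖ ^ 2)) 0 v w =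
      2 * ‖ζ‖ ^ 2 * ⟪v, w⟫_ℝ := by
    change fderiv ℝ (fderiv ℝ ((fun y : ℂ ↦ ‖y‖ ^ 2) ∘ fun u : ℂ ↦ conj u * ζ - 1)) 0 v w = _
    rw [fderiv_fderiv_comp_apply (contDiff_norm_sq ℝ).contDiffAt
      (contDiff_conj_mul_sub_one ζ).contDiffAt,
      fderiv_fderiv_norm_sq_apply, hL, fderiv_fun_const]
    simp only [ContinuousLinearMap.smulRight_apply, ContinuousLinearEquiv.coe_coe,
      ContinuousAlgEquiv.coeCLE_apply, conjCAE_apply, smul_eq_mul, Complex.inner, map_mul,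
      conj_conj, mul_re, mul_im, conj_re, conj_im, Complex.sq_norm, normSq_apply, Pi.zero_apply,
      zero_apply, map_zero, add_zero, L]
    ring
  rw [fderiv_fderiv_log_comp_apply (contDiff_norm_sq_conj_mul_sub_one ζ).contDiffAt (by simp), hB,
    hB, hB2, show ‖conj 0 * ζ - 1‖ ^ 2 = 1 by simp]
  ring

theorem fderiv_fderiv_poincarePotential_zero (hζ : ‖ζ‖ < 1) (v w : ℂ) :
    fderiv ℝ (fderiv ℝ (poincarePotential ζ)) 0 v w =
      2 * (1 + ‖ζ‖ ^ 2) * ⟪v, w⟫_ℝ - 4 * ⟪v, ζ⟫_ℝ * ⟪w, ζ⟫_ℝ := by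
  have hHess (f : ℂ → ℝ) : fderiv ℝ (fderiv ℝ f) 0 v w = iteratedFDeriv ℝ 2 f 0 ![v, w] := by
    simp [iteratedFDeriv_two_apply]
  rw [(poincarePotential_eventuallyEq hζ).fderiv.fderiv_eq, hHess,
    fun_iteratedFDeriv_sub_apply ((contDiffAt_log_norm_sq_conj_mul_sub_one ζ).sub
      contDiffAt_log_one_sub_norm_sq) contDiffAt_const,
    fun_iteratedFDeriv_sub_apply (contDiffAt_log_norm_sq_conj_mul_sub_one ζ)
      contDiffAt_log_one_sub_norm_sq, iteratedFDeriv_const_of_ne two_ne_zero]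
  simp only [sub_apply, Pi.zero_apply, sub_zero]
  rw [← hHess, ← hHess, fderiv_fderiv_log_norm_sq_conj_mul_sub_one_zero,
    fderiv_fderiv_log_one_sub_norm_sq_zero]
  ring

end PoincarePotential

theorem hessian_sum_eq_wirtinger (ζ p q : ℂ) :
    (2 * (1 + ‖ζ‖ ^ 2) * ⟪p, p⟫_ℝ - 4 * ⟪p, ζ⟫_ℝ * ⟪p, ζ⟫_ℝ +
        (2 * (1 + ‖ζ‖ ^ 2) * ⟪q, q⟫_ℝ - 4 * ⟪q, ζ⟫_ℝ * ⟪q, ζ⟫_ℝ)) / 4 =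
      ‖1 / 2 * (p - I * q)‖ ^ 2 + ‖1 / 2 * (p + I * q)‖ ^ 2 -
        2 * (conj ζ ^ 2 * (1 / 2 * (p - I * q)) * (1 / 2 * (p + I * q))).re := by
  simp only [Complex.inner, Complex.sq_norm]
  simp only [normSq_apply, mul_re, mul_im, sub_re, sub_im, add_re, add_im, conj_re, conj_im, I_re,
    I_im, one_div, inv_re, inv_im, re_ofNat, im_ofNat, pow_two]
  ring

/-- Let `h` be `C²` near `0` with `h(0) = 0` and `h_{zz̄}(0) = 0`, fix `ζ ∈ 𝔻`, and set
`φ(z) = −log(1 − |(ζ − h(z))/(conj(h(z))·ζ − 1)|²)`. Then, with `a = h_z(0)` and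
`b = h_z̄(0)`, one has `(∂²φ/∂z∂z̄)(0) = |a|² + |b|² − 2·Re(conj(ζ)²·a·b)`. -/
theorem wirtinger_mixed_second_of_phi (U : Set ℂ) (hU : IsOpen U) (h0U : (0 : ℂ) ∈ U)
    (h : ℂ → ℂ) (hC2 : ContDiffOn ℝ 2 h U) (hh0 : h 0 = 0)
    (hharm : wirtingerZ (fun z => wirtingerZbar h z) 0 = 0)
    (ζ : ℂ) (hζ : ζ ∈ Metric.ball (0 : ℂ) 1) :
    wirtingerZ (fun z : ℂ =>
        wirtingerZbar (fun z' : ℂ =>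
          ((-Real.log (1 - ‖(ζ - h z') / ((starRingEnd ℂ) (h z') * ζ - 1)‖ ^ 2) : ℝ) : ℂ)) z) 0 =
      ((‖wirtingerZ h 0‖ ^ 2 + ‖wirtingerZbar h 0‖ ^ 2 -
        2 * ((starRingEnd ℂ) ζ ^ 2 * wirtingerZ h 0 * wirtingerZbar h 0).re : ℝ) : ℂ) := by
  have hζ' : ‖ζ‖ < 1 := mem_ball_zero_iff.1 hζ
  have hh : ContDiffAt ℝ 2 h 0 := hC2.contDiffAt (hU.mem_nhds h0U)
  have hP : ContDiffAt ℝ 2 (poincarePotential ζ) (h 0) := by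
    simpa only [hh0] using contDiffAt_poincarePotential_zero hζ'
  have hΔh : Δ h 0 = 0 := by
    rw [wirtingerZ_wirtingerZbar_eq_laplacian hh] at hharm
    simpa using hharm
  change wirtingerZ (wirtingerZbar (ofRealCLM ∘ (poincarePotential ζ ∘ h))) 0 = _
  rw [wirtingerZ_wirtingerZbar_eq_laplacian (ofRealCLM.contDiff.contDiffAt.comp 0 (hP.comp 0 hh)),
    (hP.comp 0 hh).laplacian_CLM_comp_left, Function.comp_apply,
    laplacian_comp_apply_complexPlane hP hh, hΔh, map_zero, add_zero, hh0,
    fderiv_fderiv_poincarePotential_zero hζ', fderiv_fderiv_poincarePotential_zero hζ']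
  rw [ofRealCLM_apply, ← ofReal_ofNat, ← ofReal_div, hessian_sum_eq_wirtinger]
  rfl
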